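/- For every p ∈ [0, 1/8), the probability T_n^{(3)}(p) that the unit cube [0,1]^3 is tileable by available order-n tiles tends to 0 as n → ∞; in particular p_c(3) ≥ 1/8, where p_c(3) := inf{ p ∈ [0,1] : lim_{n→∞} T_n^{(3)}(p) = 1 }. -/

import Mathlib

open Set Filter Topology

noncomputable section

/-- The 3-dimensional dyadic tile
`[a/2^i, (a+1)/2^i] × [b/2^j, (b+1)/2^j] × [c/2^k, (c+1)/2^k]` as a subset of `ℝ × ℝ × ℝ`. -/
def dyadicTile3 (i j k a b c : ℕ) : Set (ℝ × ℝ × ℝ) :=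
  Set.Icc ((a : ℝ) / 2 ^ i) (((a : ℝ) + 1) / 2 ^ i) ×ˢ
    (Set.Icc ((b : ℝ) / 2 ^ j) (((b : ℝ) + 1) / 2 ^ j) ×ˢ
      Set.Icc ((c : ℝ) / 2 ^ k) (((c : ℝ) + 1) / 2 ^ k))

/-- `t` is a 3-dimensional dyadic tile of order `n` contained in the unit cube. -/
def IsDyadicTile3 (n : ℕ) (t : Set (ℝ × ℝ × ℝ)) : Prop :=
  ∃ i j k a b c : ℕ, i + j + k = n ∧ a < 2 ^ i ∧ b < 2 ^ j ∧ c < 2 ^ k ∧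
    t = dyadicTile3 i j k a b c

/-- `F` is a tiling of the region `R` by 3-dimensional dyadic tiles of order `n`. -/
def IsTiling3 (n : ℕ) (F : Set (Set (ℝ × ℝ × ℝ))) (R : Set (ℝ × ℝ × ℝ)) : Prop :=
  (∀ t ∈ F, IsDyadicTile3 n t) ∧ ⋃₀ F = R ∧
    F.Pairwise fun s t => interior s ∩ interior t = ∅

def unitCube : Set (ℝ × ℝ × ℝ) :=
  Set.Icc (0 : ℝ) 1 ×ˢ (Set.Icc (0 : ℝ) 1 ×ˢ Set.Icc (0 : ℝ) 1)

/-- Index type for the 3-dimensional dyadic tiles of order `n`: orders `i`, `j`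
(with `k = n - i - j`) of the three dyadic intervals, together with their positions. -/
abbrev TileIndex3 (n : ℕ) : Type :=
  {v : (Fin (n + 1) × Fin (n + 1)) × Fin (2 ^ n) × Fin (2 ^ n) × Fin (2 ^ n) //
    (v.1.1 : ℕ) + (v.1.2 : ℕ) ≤ n ∧ (v.2.1 : ℕ) < 2 ^ (v.1.1 : ℕ) ∧
      (v.2.2.1 : ℕ) < 2 ^ (v.1.2 : ℕ) ∧
      (v.2.2.2 : ℕ) < 2 ^ (n - (v.1.1 : ℕ) - (v.1.2 : ℕ))}

/-- The order-`n` 3-dimensional tile corresponding to an index. -/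
def tileOf3 (n : ℕ) (x : TileIndex3 n) : Set (ℝ × ℝ × ℝ) :=
  dyadicTile3 (x.1.1.1 : ℕ) (x.1.1.2 : ℕ) (n - (x.1.1.1 : ℕ) - (x.1.1.2 : ℕ))
    (x.1.2.1 : ℕ) (x.1.2.2.1 : ℕ) (x.1.2.2.2 : ℕ)

/-- The set `S` of available order-`n` tiles admits a tiling of the unit cube. -/
def TileableCube (n : ℕ) (S : Finset (TileIndex3 n)) : Prop :=
  ∃ F : Set (Set (ℝ × ℝ × ℝ)), (∀ t ∈ F, ∃ x ∈ S, t = tileOf3 n x) ∧ IsTiling3 n F unitCube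

open Classical in
/-- `T³_n(p)`: the probability that the unit cube is tileable by available order-`n` tiles,
when each order-`n` tile is available independently with probability `p`. -/
def T3 (n : ℕ) (p : ℝ) : ℝ :=
  ∑ S : Finset (TileIndex3 n),
    if TileableCube n S then
      p ^ S.card * (1 - p) ^ (Fintype.card (TileIndex3 n) - S.card) else 0

/-- The critical probability `p_c(3)` in dimension 3. -/
def pc3 : ℝ :=
  sInf {p : ℝ | p ∈ Set.Icc (0 : ℝ) 1 ∧ Tendsto (fun n => T3 n p) atTop (𝓝 1)}

/-!
Every tiling of the cube by order-`n` tiles has `2^n` tiles, so by the union bound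
`T³_n(p) ≤ N_n p^(2^n)`, where `N_n` is the number of such tilings, and it suffices to show
`∑ 8^(-#G) ≤ 1` over these tilings `G`. Discretise the cube into `2^(3n)` cells. The tiles of a
tiling that meet a fixed level of cells are determined by their footprints, which tile that level
by dyadic rectangles; peeling them off and inducting on the number of cells reduces the claim to
the planar bound `∑ 8^(-#Q) ≤ 1/4` over tilings `Q` of a nonempty part of a dyadic box by dyadic
rectangles. This is a weighted form of the paper's recursion `L ≤ p + 2 L²`: a planar tiling
either consists of the box itself or splits along one of the two midlines, and `1/4` is the fixed
point of `x = 1/8 + 2 x²`.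
-/

open Finset

lemma sum_le_sum_of_injOn {ι κ : Type*} {s : Finset ι} {t : Finset κ} {f : ι → ℝ} {g : κ → ℝ}
    (e : ι → κ) (he : Set.InjOn e s) (hst : Set.MapsTo e s t) (hfg : ∀ i ∈ s, f i ≤ g (e i))
    (hg : ∀ j ∈ t, 0 ≤ g j) : ∑ i ∈ s, f i ≤ ∑ j ∈ t, g j := by
  classical
  calc ∑ i ∈ s, f i ≤ ∑ i ∈ s, g (e i) := sum_le_sum hfg
    _ = ∑ j ∈ s.image e, g j := (sum_image he).symm
    _ ≤ ∑ j ∈ t, g j :=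
      sum_le_sum_of_subset_of_nonneg (image_subset_iff.2 hst) fun j hj _ => hg j hj

section FirstMoment

variable {ι : Type*} [Fintype ι] [DecidableEq ι]

lemma sum_superset_weight (p : ℝ) (D : Finset ι) :
    ∑ S with D ⊆ S, p ^ #S * (1 - p) ^ (Fintype.card ι - #S) = p ^ #D := by
  have hIcc : ({S | D ⊆ S} : Finset (Finset ι)) = Finset.Icc D Finset.univ := by ext; simp
  have hdisj : ∀ E ∈ (Finset.univ \ D).powerset, Disjoint D E := fun E hE =>
    disjoint_of_subset_right (mem_powerset.1 hE) disjoint_sdiff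
  rw [hIcc, Icc_eq_image_powerset (subset_univ D), sum_image fun E hE E' hE' h => by
    rw [← union_sdiff_cancel_left (hdisj E hE), ← union_sdiff_cancel_left (hdisj E' hE'),
      show D ∪ E = D ∪ E' from h]]
  calc ∑ E ∈ (Finset.univ \ D).powerset, p ^ #(D ∪ E) * (1 - p) ^ (Fintype.card ι - #(D ∪ E))
      = ∑ E ∈ (Finset.univ \ D).powerset,
          p ^ #D * (p ^ #E * (1 - p) ^ (#(Finset.univ \ D) - #E)) := by
        refine sum_congr rfl fun E hE => ?_
        rw [card_union_of_disjoint (hdisj E hE), card_sdiff_of_subset (subset_univ D), card_univ,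
          pow_add, Nat.sub_add_eq, mul_assoc]
    _ = p ^ #D := by rw [← mul_sum, sum_pow_mul_eq_add_pow, add_sub_cancel, one_pow, mul_one]

lemma sum_weight_le_of_exists_subset {p : ℝ} (hp0 : 0 ≤ p) (hp1 : p ≤ 1) (E : Finset ι → Prop)
    [DecidablePred E] (𝒟 : Finset (Finset ι)) (hE : ∀ S, E S → ∃ D ∈ 𝒟, D ⊆ S) :
    ∑ S, (if E S then p ^ #S * (1 - p) ^ (Fintype.card ι - #S) else 0) ≤ ∑ D ∈ 𝒟, p ^ #D := by
  set w : Finset ι → ℝ := fun S => p ^ #S * (1 - p) ^ (Fintype.card ι - #S)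
  have hw : ∀ S, 0 ≤ w S := fun S => mul_nonneg (pow_nonneg hp0 _) (pow_nonneg (by linarith) _)
  calc ∑ S, (if E S then w S else 0) ≤ ∑ S, ∑ D ∈ 𝒟, if D ⊆ S then w S else 0 := by
        refine sum_le_sum fun S _ => ?_
        have hnonneg : ∀ D ∈ 𝒟, 0 ≤ if D ⊆ S then w S else 0 := fun D _ => by
          split_ifs <;> simp [hw]
        split_ifs with h
        · obtain ⟨D, hD, hDS⟩ := hE S h
          simpa [hDS] using single_le_sum hnonneg hD
        · exact sum_nonneg hnonneg
    _ = ∑ D ∈ 𝒟, p ^ #D := by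
        rw [sum_comm]
        exact sum_congr rfl fun D _ => by rw [← sum_filter]; exact sum_superset_weight p D

end FirstMoment

section Tilings

variable {α : Type*} [DecidableEq α]

def IsTiling (G : Finset (Finset α)) (U : Finset α) : Prop :=
  (G : Set (Finset α)).PairwiseDisjoint id ∧ G.biUnion id = U

open Classical in
def tilings (T : Finset (Finset α)) (U : Finset α) : Finset (Finset (Finset α)) :=
  {G ∈ T.powerset | IsTiling G U}

/-- The expected number of tilings of `U` by tiles of `T` when each tile is present
independently with probability `q`; it stands in for the probability `L` of the paper. -/
def tilingWeight (T : Finset (Finset α)) (q : ℝ) (U : Finset α) : ℝ :=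
  ∑ G ∈ tilings T U, q ^ #G

variable {T G : Finset (Finset α)} {U t t' : Finset α} {q : ℝ}

namespace IsTiling

lemma subset (h : IsTiling G U) (ht : t ∈ G) : t ⊆ U := by
  rw [← h.2]
  exact subset_biUnion_of_mem id ht

lemma exists_mem {c : α} (h : IsTiling G U) (hc : c ∈ U) : ∃ t ∈ G, c ∈ t := by
  rw [← h.2] at hc
  simpa using hc

lemma eq_of_mem {c : α} (h : IsTiling G U) (ht : t ∈ G) (ht' : t' ∈ G) (hc : c ∈ t)
    (hc' : c ∈ t') : t = t' :=
  h.1.elim ht ht' (not_disjoint_iff.2 ⟨c, hc, hc'⟩)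

lemma filter (h : IsTiling G U) (p : Finset α → Prop) [DecidablePred p] (P : α → Prop)
    [DecidablePred P] (hp : ∀ t ∈ G, ∀ c ∈ t, p t ↔ P c) :
    IsTiling {t ∈ G | p t} {c ∈ U | P c} := by
  refine ⟨h.1.subset (filter_subset p G), ?_⟩
  ext c
  simp only [Finset.mem_biUnion, Finset.mem_filter, id]
  constructor
  · rintro ⟨t, ⟨ht, hpt⟩, hc⟩
    exact ⟨h.subset ht hc, (hp t ht c hc).1 hpt⟩
  · rintro ⟨hc, hPc⟩
    obtain ⟨t, ht, hct⟩ := h.exists_mem hc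
    exact ⟨t, ⟨ht, (hp t ht c hct).2 hPc⟩, hct⟩

end IsTiling

lemma mem_tilings : G ∈ tilings T U ↔ G ⊆ T ∧ IsTiling G U := by
  simp [tilings]

lemma tilingWeight_nonneg (hq : 0 ≤ q) : 0 ≤ tilingWeight T q U :=
  sum_nonneg fun _ _ => pow_nonneg hq _

lemma tilingWeight_empty (hT : ∅ ∉ T) : tilingWeight T q ∅ = 1 := by
  have : tilings T ∅ = {∅} := by
    ext G
    simp only [mem_tilings, Finset.mem_singleton]
    refine ⟨fun ⟨hGT, hG⟩ => Finset.eq_empty_of_forall_notMem fun t ht => ?_, ?_⟩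
    · exact hT (subset_empty.1 (hG.subset ht) ▸ hGT ht)
    · rintro rfl
      exact ⟨empty_subset _, by simp, rfl⟩
  simp [tilingWeight, this]

lemma sum_tilings_mem_le (hT : ∅ ∉ T) (hq : 0 ≤ q) (hU : U ⊆ t) :
    ∑ G ∈ tilings T U with t ∈ G, q ^ #G ≤ q := by
  have hsub : {G ∈ tilings T U | t ∈ G} ⊆ {{t}} := by
    intro G hG
    obtain ⟨⟨hGT, hG⟩, ht⟩ := (mem_filter.1 hG).imp_left mem_tilings.1
    refine Finset.mem_singleton.2 (eq_singleton_iff_unique_mem.2 ⟨ht, fun t' ht' => ?_⟩)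
    obtain ⟨c, hc⟩ := nonempty_iff_ne_empty.2 (ne_of_mem_of_not_mem (hGT ht') hT)
    exact hG.eq_of_mem ht' ht hc (hU (hG.subset ht' hc))
  calc ∑ G ∈ tilings T U with t ∈ G, q ^ #G ≤ ∑ G ∈ {{t}}, q ^ #G :=
        sum_le_sum_of_subset_of_nonneg hsub fun _ _ _ => pow_nonneg hq _
    _ = q := by simp

lemma sum_tilings_split_le (P : α → Prop) [DecidablePred P] (hq : 0 ≤ q) :
    ∑ G ∈ tilings T U with ∀ t ∈ G, (∀ c ∈ t, P c) ∨ ∀ c ∈ t, ¬ P c, q ^ #G ≤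
      tilingWeight T q {c ∈ U | P c} * tilingWeight T q {c ∈ U | ¬ P c} := by
  rw [tilingWeight, tilingWeight, sum_mul_sum, ← sum_product']
  refine sum_le_sum_of_injOn (fun G => ({t ∈ G | ∀ c ∈ t, P c}, {t ∈ G | ¬ ∀ c ∈ t, P c}))
    ?_ ?_ ?_ fun _ _ => mul_nonneg (pow_nonneg hq _) (pow_nonneg hq _)
  · intro G _ G' _ h
    simp only [Prod.mk.injEq] at h
    rw [← filter_union_filter_not_eq (fun t => ∀ c ∈ t, P c) G,
      ← filter_union_filter_not_eq (fun t => ∀ c ∈ t, P c) G', h.1, h.2]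
  · intro G hG
    obtain ⟨⟨hGT, hGU⟩, hside⟩ := (mem_filter.1 hG).imp_left mem_tilings.1
    have hiff : ∀ t ∈ G, ∀ c ∈ t, (∀ c ∈ t, P c) ↔ P c := fun t ht c hc =>
      ⟨fun hall => hall c hc, fun hPc => (hside t ht).resolve_right fun hall => hall c hc hPc⟩
    refine mem_product.2 ⟨mem_tilings.2 ⟨(filter_subset _ _).trans hGT, ?_⟩,
      mem_tilings.2 ⟨(filter_subset _ _).trans hGT, ?_⟩⟩
    · exact hGU.filter _ _ hiff
    · exact hGU.filter _ _ fun t ht c hc => not_congr (hiff t ht c hc)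
  · intro G _
    rw [← pow_add, card_filter_add_card_filter_not]

lemma tilingWeight_le_sum_layers (p : Finset α → Prop) [DecidablePred p] (hq : 0 ≤ q) :
    tilingWeight T q U ≤ ∑ P ∈ (tilings T U).image (filter p),
      q ^ #P * tilingWeight T q (U \ P.biUnion id) := by
  rw [tilingWeight, ← sum_fiberwise_of_maps_to fun G hG => mem_image_of_mem (filter p) hG]
  refine sum_le_sum fun P _ => ?_
  rw [tilingWeight, mul_sum]
  refine sum_le_sum_of_injOn (filter (¬ p ·)) ?_ ?_ ?_
    fun _ _ => mul_nonneg (pow_nonneg hq _) (pow_nonneg hq _)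
  · intro G hG G' hG' h
    rw [← filter_union_filter_not_eq p G, ← filter_union_filter_not_eq p G',
      (mem_filter.1 hG).2, (mem_filter.1 hG').2]
    exact congrArg (P ∪ ·) h
  · intro G hG
    obtain ⟨⟨hGT, hGU⟩, rfl⟩ := (mem_filter.1 hG).imp_left mem_tilings.1
    refine mem_tilings.2 ⟨(filter_subset _ _).trans hGT, ?_⟩
    rw [sdiff_eq_filter]
    refine hGU.filter _ _ fun t ht c hc => ⟨fun hpt hcP => ?_, fun hcP hpt => hcP ?_⟩
    · obtain ⟨t', ht', hct'⟩ := Finset.mem_biUnion.1 hcP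
      exact hpt (hGU.eq_of_mem ht (mem_filter.1 ht').1 hc hct' ▸ (mem_filter.1 ht').2)
    · exact Finset.mem_biUnion.2 ⟨t, mem_filter.2 ⟨ht, hpt⟩, hc⟩
  · intro G hG
    rw [← (mem_filter.1 hG).2, ← pow_add, card_filter_add_card_filter_not]

end Tilings

/-- The cells `u` (standing for `[u/2^n, (u+1)/2^n]`) that make up `[a/2^i, (a+1)/2^i]`. -/
def dyadicCells (n i a : ℕ) : Finset ℕ := Ico (a * 2 ^ (n - i)) ((a + 1) * 2 ^ (n - i))

/-- The first cell of the right half of `[a/2^i, (a+1)/2^i]`. -/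
def dyadicMid (n i a : ℕ) : ℕ := (2 * a + 1) * 2 ^ (n - (i + 1))

section DyadicCells

variable {n i j a b u : ℕ}

lemma mem_dyadicCells :
    u ∈ dyadicCells n i a ↔ a * 2 ^ (n - i) ≤ u ∧ u < (a + 1) * 2 ^ (n - i) :=
  mem_Ico

lemma mem_dyadicCells_iff_div : u ∈ dyadicCells n i a ↔ u / 2 ^ (n - i) = a := by
  have := Nat.two_pow_pos (n - i)
  rw [mem_dyadicCells, Nat.div_eq_iff this, add_mul, one_mul]
  omega

lemma card_dyadicCells : #(dyadicCells n i a) = 2 ^ (n - i) := by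
  rw [dyadicCells, Nat.card_Ico, add_mul, one_mul, Nat.add_sub_cancel_left]

lemma dyadicCells_nonempty : (dyadicCells n i a).Nonempty := by
  rw [← card_pos, card_dyadicCells]
  positivity

lemma eq_of_mem_dyadicCells (ha : u ∈ dyadicCells n i a) (hb : u ∈ dyadicCells n i b) : a = b :=
  (mem_dyadicCells_iff_div.1 ha).symm.trans (mem_dyadicCells_iff_div.1 hb)

lemma div_eq_of_mem_dyadicCells (hu : u ∈ dyadicCells n j b) (hij : i ≤ j) (hj : j ≤ n) :
    u / 2 ^ (n - i) = b / 2 ^ (j - i) := by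
  rw [← mem_dyadicCells_iff_div.1 hu, Nat.div_div_eq_div_mul, ← pow_add]
  congr 2
  omega

lemma order_eq_of_dyadicCells_eq (hi : i ≤ n) (hj : j ≤ n)
    (h : dyadicCells n i a = dyadicCells n j b) : i = j := by
  have := Nat.pow_right_injective le_rfl
    (card_dyadicCells.symm.trans ((congrArg card h).trans card_dyadicCells))
  omega

lemma dyadicCells_inj (hi : i ≤ n) (hj : j ≤ n) :
    dyadicCells n i a = dyadicCells n j b ↔ i = j ∧ a = b := by
  refine ⟨fun h => ?_, by rintro ⟨rfl, rfl⟩; rfl⟩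
  obtain rfl := order_eq_of_dyadicCells_eq hi hj h
  obtain ⟨u, hu⟩ := dyadicCells_nonempty (n := n) (i := i) (a := a)
  exact ⟨rfl, eq_of_mem_dyadicCells hu (h ▸ hu)⟩

lemma order_lt_of_dyadicCells_ssubset (hi : i ≤ n) (hj : j ≤ n)
    (h : dyadicCells n j b ⊆ dyadicCells n i a) (hne : dyadicCells n j b ≠ dyadicCells n i a) :
    i < j := by
  have hle : 2 ^ (n - j) ≤ 2 ^ (n - i) := by
    simpa only [card_dyadicCells] using Finset.card_le_card h
  rcases (Nat.pow_le_pow_iff_right one_lt_two).1 hle |>.lt_or_eq with hlt | heq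
  · omega
  · obtain rfl : j = i := by omega
    obtain ⟨u, hu⟩ := dyadicCells_nonempty (n := n) (i := j) (a := b)
    exact absurd (by rw [eq_of_mem_dyadicCells hu (h hu)]) hne

lemma div_two_pow_div_two (hi : i < n) :
    u / 2 ^ (n - (i + 1)) / 2 = u / 2 ^ (n - i) := by
  rw [Nat.div_div_eq_div_mul, ← pow_succ, show n - (i + 1) + 1 = n - i by omega]

lemma mem_dyadicCells_left (hi : i < n) :
    u ∈ dyadicCells n (i + 1) (2 * a) ↔ u ∈ dyadicCells n i a ∧ u < dyadicMid n i a := by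
  rw [mem_dyadicCells_iff_div, mem_dyadicCells_iff_div, ← div_two_pow_div_two hi, dyadicMid,
    ← Nat.div_lt_iff_lt_mul (by positivity)]
  omega

lemma mem_dyadicCells_right (hi : i < n) :
    u ∈ dyadicCells n (i + 1) (2 * a + 1) ↔ u ∈ dyadicCells n i a ∧ ¬ u < dyadicMid n i a := by
  rw [mem_dyadicCells_iff_div, mem_dyadicCells_iff_div, ← div_two_pow_div_two hi, dyadicMid,
    ← Nat.div_lt_iff_lt_mul (by positivity)]
  omega

lemma dyadicCells_side (hij : i < j) (hj : j ≤ n) :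
    (∀ u ∈ dyadicCells n j b, u < dyadicMid n i a) ∨
      ∀ u ∈ dyadicCells n j b, ¬ u < dyadicMid n i a := by
  simp only [dyadicMid, ← Nat.div_lt_iff_lt_mul (Nat.two_pow_pos _)]
  by_cases h : b / 2 ^ (j - (i + 1)) < 2 * a + 1
  · exact .inl fun u hu => by rwa [div_eq_of_mem_dyadicCells hu hij hj]
  · exact .inr fun u hu => by rwa [div_eq_of_mem_dyadicCells hu hij hj]

end DyadicCells

/-- Products of two dyadic intervals of orders at most `n`; these include the footprints of all
cubical tiles of order `n`. -/
def dyadicRects (n : ℕ) : Finset (Finset (ℕ × ℕ)) :=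
  ((range (n + 1) ×ˢ range (2 ^ n)) ×ˢ (range (n + 1) ×ˢ range (2 ^ n))).image
    fun r => dyadicCells n r.1.1 r.1.2 ×ˢ dyadicCells n r.2.1 r.2.2

section DyadicRects

variable {n i a : ℕ} {R : Finset (ℕ × ℕ)}

lemma mem_dyadicRects : R ∈ dyadicRects n ↔ ∃ i a j b, i ≤ n ∧ a < 2 ^ n ∧ j ≤ n ∧ b < 2 ^ n ∧
    dyadicCells n i a ×ˢ dyadicCells n j b = R := by
  simp [dyadicRects, and_assoc]

lemma empty_notMem_dyadicRects : ∅ ∉ dyadicRects n := fun h => by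
  obtain ⟨i, a, j, b, -, -, -, -, h⟩ := mem_dyadicRects.1 h
  exact (dyadicCells_nonempty.product dyadicCells_nonempty).ne_empty h

lemma image_fst_of_mem_dyadicRects (hR : R ∈ dyadicRects n) :
    ∃ i ≤ n, ∃ a, R.image Prod.fst = dyadicCells n i a := by
  obtain ⟨i, a, j, b, hi, -, -, -, rfl⟩ := mem_dyadicRects.1 hR
  exact ⟨i, hi, a, product_image_fst dyadicCells_nonempty⟩

lemma image_snd_of_mem_dyadicRects (hR : R ∈ dyadicRects n) :
    ∃ j ≤ n, ∃ b, R.image Prod.snd = dyadicCells n j b := by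
  obtain ⟨i, a, j, b, -, -, hj, -, rfl⟩ := mem_dyadicRects.1 hR
  exact ⟨j, hj, b, product_image_snd dyadicCells_nonempty⟩

lemma image_fst_product_image_snd (hR : R ∈ dyadicRects n) :
    R.image Prod.fst ×ˢ R.image Prod.snd = R := by
  obtain ⟨i, a, j, b, -, -, -, -, rfl⟩ := mem_dyadicRects.1 hR
  rw [product_image_fst dyadicCells_nonempty, product_image_snd dyadicCells_nonempty]

variable {U : Finset (ℕ × ℕ)} {q x : ℝ}

lemma subset_product_half_left {I : Finset ℕ} (hi : i < n) (hU : U ⊆ dyadicCells n i a ×ˢ I)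
    (h : ∀ c ∈ U, c.1 < dyadicMid n i a) : U ⊆ dyadicCells n (i + 1) (2 * a) ×ˢ I := fun c hc =>
  mem_product.2 ⟨(mem_dyadicCells_left hi).2 ⟨(mem_product.1 (hU hc)).1, h c hc⟩,
    (mem_product.1 (hU hc)).2⟩

lemma subset_product_half_right {I : Finset ℕ} (hi : i < n) (hU : U ⊆ dyadicCells n i a ×ˢ I)
    (h : ∀ c ∈ U, ¬ c.1 < dyadicMid n i a) : U ⊆ dyadicCells n (i + 1) (2 * a + 1) ×ˢ I :=
  fun c hc => mem_product.2 ⟨(mem_dyadicCells_right hi).2 ⟨(mem_product.1 (hU hc)).1, h c hc⟩,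
    (mem_product.1 (hU hc)).2⟩

lemma subset_half_left_product {I : Finset ℕ} (hi : i < n) (hU : U ⊆ I ×ˢ dyadicCells n i a)
    (h : ∀ c ∈ U, c.2 < dyadicMid n i a) : U ⊆ I ×ˢ dyadicCells n (i + 1) (2 * a) := fun c hc =>
  mem_product.2 ⟨(mem_product.1 (hU hc)).1,
    (mem_dyadicCells_left hi).2 ⟨(mem_product.1 (hU hc)).2, h c hc⟩⟩

lemma subset_half_right_product {I : Finset ℕ} (hi : i < n) (hU : U ⊆ I ×ˢ dyadicCells n i a)
    (h : ∀ c ∈ U, ¬ c.2 < dyadicMid n i a) : U ⊆ I ×ˢ dyadicCells n (i + 1) (2 * a + 1) :=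
  fun c hc => mem_product.2 ⟨(mem_product.1 (hU hc)).1,
    (mem_dyadicCells_right hi).2 ⟨(mem_product.1 (hU hc)).2, h c hc⟩⟩

/-- `π` is a coordinate projection: a rectangle not spanning the `π`-side `[a/2^i, (a+1)/2^i]`
of the box lies in one of its halves. -/
lemma sum_tilings_not_span_le (π : ℕ × ℕ → ℕ)
    (hπ : ∀ R ∈ dyadicRects n, ∃ j ≤ n, ∃ b, R.image π = dyadicCells n j b) (hi : i ≤ n)
    (hU : ∀ c ∈ U, π c ∈ dyadicCells n i a) (hUne : U.Nonempty) (hq : 0 ≤ q) (hx : 0 ≤ x)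
    (hhalves : i < n → tilingWeight (dyadicRects n) q {c ∈ U | π c < dyadicMid n i a} ≤ x ∧
      tilingWeight (dyadicRects n) q {c ∈ U | ¬ π c < dyadicMid n i a} ≤ x) :
    ∑ G ∈ tilings (dyadicRects n) U with ∀ R ∈ G, R.image π ≠ dyadicCells n i a, q ^ #G ≤
      x ^ 2 := by
  set P : ℕ × ℕ → Prop := fun c => π c < dyadicMid n i a
  have hside : ∀ G ∈ tilings (dyadicRects n) U, ∀ R ∈ G, R.image π ≠ dyadicCells n i a →
      i < n ∧ ((∀ c ∈ R, P c) ∨ ∀ c ∈ R, ¬ P c) := by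
    intro G hG R hR hspan
    obtain ⟨hGT, hGU⟩ := mem_tilings.1 hG
    obtain ⟨j, hj, b, hRb⟩ := hπ R (hGT hR)
    have hsub : R.image π ⊆ dyadicCells n i a :=
      image_subset_iff.2 fun c hc => hU c (hGU.subset hR hc)
    rw [hRb] at hsub hspan
    have hij := order_lt_of_dyadicCells_ssubset hi hj hsub hspan
    have hπR : ∀ c ∈ R, π c ∈ dyadicCells n j b := fun c hc => hRb ▸ mem_image_of_mem π hc
    exact ⟨by omega, (dyadicCells_side (a := a) (b := b) hij hj).imp
      (fun h c hc => h _ (hπR c hc)) (fun h c hc => h _ (hπR c hc))⟩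
  by_cases hin : i < n
  · calc _ ≤ ∑ G ∈ tilings (dyadicRects n) U with ∀ R ∈ G, (∀ c ∈ R, P c) ∨ ∀ c ∈ R, ¬ P c,
            q ^ #G :=
          sum_le_sum_of_subset_of_nonneg
            (monotone_filter_right _ fun G hG hspan R hR => (hside G hG R hR (hspan R hR)).2)
            fun _ _ _ => pow_nonneg hq _
      _ ≤ _ := sum_tilings_split_le P hq
      _ ≤ x * x := mul_le_mul (hhalves hin).1 (hhalves hin).2 (tilingWeight_nonneg hq) hx
      _ = x ^ 2 := (sq x).symm
  · rw [sum_eq_zero fun G hG => ?_]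
    · positivity
    obtain ⟨hG, hspan⟩ := mem_filter.1 hG
    obtain ⟨c, hc⟩ := hUne
    obtain ⟨R, hR, -⟩ := (mem_tilings.1 hG).2.exists_mem hc
    exact absurd (hside G hG R hR (hspan R hR)).1 hin

/-- A rectangle spanning the full width of the box and one spanning its full height share a
cell, so they are one tile: the box. -/
lemma IsTiling.eq_product_of_span {G : Finset (Finset (ℕ × ℕ))} {I J : Finset ℕ}
    {R R' : Finset (ℕ × ℕ)} (hGT : G ⊆ dyadicRects n) (hG : IsTiling G U) (hUbox : U ⊆ I ×ˢ J)
    (hR : R ∈ G) (hR' : R' ∈ G) (hRI : R.image Prod.fst = I) (hR'J : R'.image Prod.snd = J) :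
    R = I ×ˢ J := by
  have hbox : ∀ {S}, S ∈ G → ∀ c ∈ S, c.1 ∈ I ∧ c.2 ∈ J := fun hS c hc =>
    mem_product.1 (hUbox (hG.subset hS hc))
  have hmem : ∀ {S}, S ∈ G → ∀ c : ℕ × ℕ,
      c.1 ∈ S.image Prod.fst → c.2 ∈ S.image Prod.snd → c ∈ S :=
    fun hS c h1 h2 => image_fst_product_image_snd (hGT hS) ▸ mem_product.2 ⟨h1, h2⟩
  obtain ⟨⟨k, l'⟩, hkl'⟩ := nonempty_iff_ne_empty.2 (ne_of_mem_of_not_mem (hGT hR')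
    empty_notMem_dyadicRects)
  obtain ⟨⟨k', l⟩, hk'l⟩ := nonempty_iff_ne_empty.2 (ne_of_mem_of_not_mem (hGT hR)
    empty_notMem_dyadicRects)
  have hRR' : R = R' := hG.eq_of_mem hR hR'
    (hmem hR (k, l) (hRI ▸ (hbox hR' _ hkl').1) (Finset.mem_image.2 ⟨_, hk'l, rfl⟩))
    (hmem hR' (k, l) (Finset.mem_image.2 ⟨_, hkl', rfl⟩) (hR'J ▸ (hbox hR _ hk'l).2))
  rw [← image_fst_product_image_snd (hGT hR), hRI, hRR', hR'J]

/-- Unless the box itself is a tile, no tiling has both a rectangle spanning the full width and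
one spanning the full height. -/
lemma tilingWeight_le_add_not_span {I J : Finset ℕ} (hUbox : U ⊆ I ×ˢ J) (hq : 0 ≤ q) :
    tilingWeight (dyadicRects n) q U ≤ q +
      ∑ G ∈ tilings (dyadicRects n) U with ∀ R ∈ G, R.image Prod.fst ≠ I, q ^ #G +
      ∑ G ∈ tilings (dyadicRects n) U with ∀ R ∈ G, R.image Prod.snd ≠ J, q ^ #G := by
  set S := tilings (dyadicRects n) U
  have hspan := sum_filter_add_sum_filter_not {G ∈ S | I ×ˢ J ∉ G}
    (fun G => ∃ R ∈ G, R.image Prod.fst = I) (fun G => q ^ #G)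
  have hx : ∑ G ∈ {G ∈ S | I ×ˢ J ∉ G} with ¬ ∃ R ∈ G, R.image Prod.fst = I, q ^ #G ≤
      ∑ G ∈ S with ∀ R ∈ G, R.image Prod.fst ≠ I, q ^ #G := by
    refine sum_le_sum_of_subset_of_nonneg (fun G hG => ?_) fun _ _ _ => pow_nonneg hq _
    simp only [Finset.mem_filter, not_exists, not_and] at hG ⊢
    exact ⟨hG.1.1, hG.2⟩
  have hy : ∑ G ∈ {G ∈ S | I ×ˢ J ∉ G} with ∃ R ∈ G, R.image Prod.fst = I, q ^ #G ≤
      ∑ G ∈ S with ∀ R ∈ G, R.image Prod.snd ≠ J, q ^ #G := by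
    refine sum_le_sum_of_subset_of_nonneg (fun G hG => ?_) fun _ _ _ => pow_nonneg hq _
    obtain ⟨⟨hGS, hbox⟩, R, hR, hRI⟩ := (mem_filter.1 hG).imp_left mem_filter.1
    obtain ⟨hGT, hGU⟩ := mem_tilings.1 hGS
    exact mem_filter.2 ⟨hGS, fun R' hR' hR'J =>
      hbox (hGU.eq_product_of_span hGT hUbox hR hR' hRI hR'J ▸ hR)⟩
  have hfull := sum_tilings_mem_le (q := q) (empty_notMem_dyadicRects (n := n)) hq hUbox
  rw [tilingWeight, ← sum_filter_add_sum_filter_not S (I ×ˢ J ∈ ·)]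
  linarith

end DyadicRects

theorem tilingWeight_dyadicRects_le {q x : ℝ} (hq : 0 ≤ q) (hqx : q + 2 * x ^ 2 ≤ x)
    {n i j a b : ℕ} {U : Finset (ℕ × ℕ)} (hi : i ≤ n) (hj : j ≤ n) (hU : U.Nonempty)
    (hUbox : U ⊆ dyadicCells n i a ×ˢ dyadicCells n j b) :
    tilingWeight (dyadicRects n) q U ≤ x := by
  have hx : 0 ≤ x := by nlinarith
  induction hd : (n - i) + (n - j) using Nat.strong_induction_on generalizing i j a b U with
  | _ d ih =>
  have hUI : ∀ c ∈ U, c.1 ∈ dyadicCells n i a ∧ c.2 ∈ dyadicCells n j b := fun c hc =>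
    mem_product.1 (hUbox hc)
  set mx := dyadicMid n i a
  set my := dyadicMid n j b
  have hleft : i < n → ∀ V ⊆ U, V.Nonempty → (∀ c ∈ V, c.1 < mx) →
      tilingWeight (dyadicRects n) q V ≤ x := fun hin V hVU hV h =>
    ih _ (by omega) hin hj hV (subset_product_half_left hin (hVU.trans hUbox) h) rfl
  have hright : i < n → ∀ V ⊆ U, V.Nonempty → (∀ c ∈ V, ¬ c.1 < mx) →
      tilingWeight (dyadicRects n) q V ≤ x := fun hin V hVU hV h =>
    ih _ (by omega) hin hj hV (subset_product_half_right hin (hVU.trans hUbox) h) rfl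
  have hbot : j < n → ∀ V ⊆ U, V.Nonempty → (∀ c ∈ V, c.2 < my) →
      tilingWeight (dyadicRects n) q V ≤ x := fun hjn V hVU hV h =>
    ih _ (by omega) hi hjn hV (subset_half_left_product hjn (hVU.trans hUbox) h) rfl
  have htop : j < n → ∀ V ⊆ U, V.Nonempty → (∀ c ∈ V, ¬ c.2 < my) →
      tilingWeight (dyadicRects n) q V ≤ x := fun hjn V hVU hV h =>
    ih _ (by omega) hi hjn hV (subset_half_right_product hjn (hVU.trans hUbox) h) rfl
  by_cases hL : i < n ∧ ∀ c ∈ U, c.1 < mx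
  · exact hleft hL.1 U subset_rfl hU hL.2
  by_cases hR : i < n ∧ ∀ c ∈ U, ¬ c.1 < mx
  · exact hright hR.1 U subset_rfl hU hR.2
  by_cases hB : j < n ∧ ∀ c ∈ U, c.2 < my
  · exact hbot hB.1 U subset_rfl hU hB.2
  by_cases hT : j < n ∧ ∀ c ∈ U, ¬ c.2 < my
  · exact htop hT.1 U subset_rfl hU hT.2
  have hnotx := sum_tilings_not_span_le Prod.fst (fun R => image_fst_of_mem_dyadicRects) hi
    (fun c hc => (hUI c hc).1) hU hq hx fun hin =>
      ⟨hleft hin _ (filter_subset _ _) (filter_nonempty_iff.2 (by simpa [hin] using hR))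
        fun c hc => (mem_filter.1 hc).2,
      hright hin _ (filter_subset _ _) (filter_nonempty_iff.2 (by simpa [hin] using hL))
        fun c hc => (mem_filter.1 hc).2⟩
  have hnoty := sum_tilings_not_span_le Prod.snd (fun R => image_snd_of_mem_dyadicRects) hj
    (fun c hc => (hUI c hc).2) hU hq hx fun hjn =>
      ⟨hbot hjn _ (filter_subset _ _) (filter_nonempty_iff.2 (by simpa [hjn] using hT))
        fun c hc => (mem_filter.1 hc).2,
      htop hjn _ (filter_subset _ _) (filter_nonempty_iff.2 (by simpa [hjn] using hB))
        fun c hc => (mem_filter.1 hc).2⟩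
  linarith [tilingWeight_le_add_not_span (n := n) hUbox hq]

section Tiles3

variable {n : ℕ}

def tileCells (x : TileIndex3 n) : Finset (ℕ × ℕ × ℕ) :=
  dyadicCells n x.1.1.1 x.1.2.1 ×ˢ
    (dyadicCells n x.1.1.2 x.1.2.2.1 ×ˢ dyadicCells n (n - x.1.1.1 - x.1.1.2) x.1.2.2.2)

def dyadicTiles3 (n : ℕ) : Finset (Finset (ℕ × ℕ × ℕ)) := univ.image (tileCells (n := n))

def cubeCells (n : ℕ) : Finset (ℕ × ℕ × ℕ) :=
  dyadicCells n 0 0 ×ˢ (dyadicCells n 0 0 ×ˢ dyadicCells n 0 0)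

def footprint (t : Finset (ℕ × ℕ × ℕ)) : Finset (ℕ × ℕ) := t.image fun c => (c.1, c.2.1)

def MeetsLevel (s : ℕ) (t : Finset (ℕ × ℕ × ℕ)) : Prop := ∃ c ∈ t, c.2.2 = s

instance (s : ℕ) : DecidablePred (MeetsLevel s) := fun t =>
  inferInstanceAs (Decidable (∃ c ∈ t, c.2.2 = s))

def levelSlice (U : Finset (ℕ × ℕ × ℕ)) (s : ℕ) : Finset (ℕ × ℕ) :=
  footprint {c ∈ U | c.2.2 = s}

variable {G : Finset (Finset (ℕ × ℕ × ℕ))} {U t t' : Finset (ℕ × ℕ × ℕ)} {s u v : ℕ} {q : ℝ}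

lemma mem_levelSlice : (u, v) ∈ levelSlice U s ↔ (u, v, s) ∈ U := by
  simp [levelSlice, footprint]

lemma tileCells_nonempty (x : TileIndex3 n) : (tileCells x).Nonempty :=
  dyadicCells_nonempty.product (dyadicCells_nonempty.product dyadicCells_nonempty)

lemma empty_notMem_dyadicTiles3 : ∅ ∉ dyadicTiles3 n := fun h => by
  obtain ⟨x, -, hx⟩ := Finset.mem_image.1 h
  exact (tileCells_nonempty x).ne_empty hx

lemma footprint_tileCells (x : TileIndex3 n) :
    footprint (tileCells x) =
      dyadicCells n x.1.1.1 x.1.2.1 ×ˢ dyadicCells n x.1.1.2 x.1.2.2.1 := by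
  obtain ⟨z, hz⟩ := dyadicCells_nonempty (n := n) (i := n - x.1.1.1 - x.1.1.2) (a := x.1.2.2.2)
  ext ⟨u, v⟩
  simp only [footprint, tileCells, Finset.mem_image, mem_product, Prod.exists, Prod.mk.injEq]
  exact ⟨by rintro ⟨u, v, z, ⟨hu, hv, -⟩, rfl, rfl⟩; exact ⟨hu, hv⟩,
    fun ⟨hu, hv⟩ => ⟨u, v, z, ⟨hu, hv, hz⟩, rfl, rfl⟩⟩

lemma mem_tileCells {x : TileIndex3 n} {z : ℕ} :
    (u, v, z) ∈ tileCells x ↔ (u, v) ∈ footprint (tileCells x) ∧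
      z ∈ dyadicCells n (n - x.1.1.1 - x.1.1.2) x.1.2.2.2 := by
  rw [footprint_tileCells]
  simp [tileCells, and_assoc]

lemma footprint_mem_dyadicRects (x : TileIndex3 n) : footprint (tileCells x) ∈ dyadicRects n :=
  mem_dyadicRects.2 ⟨_, _, _, _, x.1.1.1.is_le, x.1.2.1.2, x.1.1.2.is_le, x.1.2.2.1.2,
    (footprint_tileCells x).symm⟩

lemma mem_of_mem_footprint (ht : t ∈ dyadicTiles3 n) (hs : MeetsLevel s t)
    (huv : (u, v) ∈ footprint t) : (u, v, s) ∈ t := by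
  obtain ⟨x, -, rfl⟩ := Finset.mem_image.1 ht
  obtain ⟨⟨u', v', z⟩, hc, rfl⟩ := hs
  exact mem_tileCells.2 ⟨huv, (mem_tileCells.1 hc).2⟩

/-- The orders of the first two sides of a tile fix the order of the third. -/
lemma eq_of_footprint_eq (ht : t ∈ dyadicTiles3 n) (ht' : t' ∈ dyadicTiles3 n)
    (hs : MeetsLevel s t) (hs' : MeetsLevel s t') (h : footprint t = footprint t') : t = t' := by
  obtain ⟨x, -, rfl⟩ := Finset.mem_image.1 ht
  obtain ⟨y, -, rfl⟩ := Finset.mem_image.1 ht'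
  have hxy := h
  rw [footprint_tileCells, footprint_tileCells] at hxy
  have hi := order_eq_of_dyadicCells_eq x.1.1.1.is_le y.1.1.1.is_le <| by
    simpa only [product_image_fst dyadicCells_nonempty] using congrArg (Finset.image Prod.fst) hxy
  have hj := order_eq_of_dyadicCells_eq x.1.1.2.is_le y.1.1.2.is_le <| by
    simpa only [product_image_snd dyadicCells_nonempty] using congrArg (Finset.image Prod.snd) hxy
  obtain ⟨⟨u, v, z⟩, hc, rfl⟩ := hs
  obtain ⟨⟨u', v', z'⟩, hc', hz' : z' = z⟩ := hs'
  subst hz'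
  have hz := (mem_tileCells.1 hc).2
  rw [hi, hj] at hz
  have hk := eq_of_mem_dyadicCells hz (mem_tileCells.1 hc').2
  ext ⟨u, v, z⟩
  rw [mem_tileCells, mem_tileCells, h, hi, hj, hk]

lemma IsTiling.footprint_layer (hGT : G ⊆ dyadicTiles3 n) (hG : IsTiling G U) :
    {t ∈ G | MeetsLevel s t}.image footprint ∈ tilings (dyadicRects n) (levelSlice U s) := by
  refine mem_tilings.2 ⟨fun f hf => ?_, fun f hf f' hf' hne => ?_, ?_⟩
  · obtain ⟨t, ht, rfl⟩ := Finset.mem_image.1 hf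
    obtain ⟨x, -, rfl⟩ := Finset.mem_image.1 (hGT (mem_filter.1 ht).1)
    exact footprint_mem_dyadicRects x
  · obtain ⟨t, ht, rfl⟩ := Finset.mem_image.1 hf
    obtain ⟨t', ht', rfl⟩ := Finset.mem_image.1 hf'
    obtain ⟨htG, hts⟩ := mem_filter.1 ht
    obtain ⟨htG', hts'⟩ := mem_filter.1 ht'
    refine disjoint_left.2 fun ⟨u, v⟩ huv huv' => hne ?_
    rw [hG.eq_of_mem htG htG' (mem_of_mem_footprint (hGT htG) hts huv)
      (mem_of_mem_footprint (hGT htG') hts' huv')]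
  · ext ⟨u, v⟩
    simp only [Finset.mem_biUnion, Finset.mem_image, mem_filter, id, mem_levelSlice]
    constructor
    · rintro ⟨_, ⟨t, ⟨htG, hts⟩, rfl⟩, huv⟩
      exact hG.subset htG (mem_of_mem_footprint (hGT htG) hts huv)
    · intro hc
      obtain ⟨t, htG, hct⟩ := hG.exists_mem hc
      exact ⟨_, ⟨t, ⟨htG, _, hct, rfl⟩, rfl⟩, Finset.mem_image_of_mem _ hct⟩

/-- A layer is determined by the footprints of its tiles, which tile the level slice. -/
lemma sum_layers_le_tilingWeight_levelSlice (s : ℕ) (hq : 0 ≤ q) :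
    ∑ P ∈ (tilings (dyadicTiles3 n) U).image (filter (MeetsLevel s)), q ^ #P ≤
      tilingWeight (dyadicRects n) q (levelSlice U s) := by
  set layers := (tilings (dyadicTiles3 n) U).image (filter (MeetsLevel s))
  have hlayer : ∀ P ∈ layers, ∀ t ∈ P, t ∈ dyadicTiles3 n ∧ MeetsLevel s t := by
    intro P hP t ht
    obtain ⟨G, hG, rfl⟩ := Finset.mem_image.1 hP
    exact ⟨(mem_tilings.1 hG).1 (mem_filter.1 ht).1, (mem_filter.1 ht).2⟩
  have hinj : ∀ P ∈ layers, ∀ t ∈ P, ∀ t' ∈ P, footprint t = footprint t' → t = t' :=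
    fun P hP t ht t' ht' => eq_of_footprint_eq (hlayer P hP t ht).1 (hlayer P hP t' ht').1
      (hlayer P hP t ht).2 (hlayer P hP t' ht').2
  have hsub : ∀ P ∈ layers, ∀ P' ∈ layers, P.image footprint = P'.image footprint → P ⊆ P' :=
    fun P hP P' hP' h t ht => by
      obtain ⟨t', ht', he⟩ := Finset.mem_image.1 (h ▸ Finset.mem_image_of_mem footprint ht)
      rwa [eq_of_footprint_eq (hlayer P' hP' t' ht').1 (hlayer P hP t ht).1
        (hlayer P' hP' t' ht').2 (hlayer P hP t ht).2 he] at ht'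
  refine sum_le_sum_of_injOn (Finset.image footprint)
    (fun P hP P' hP' h => (hsub P hP P' hP' h).antisymm (hsub P' hP' P hP h.symm)) ?_
    (fun P hP => (card_image_of_injOn (hinj P hP)).symm ▸ le_rfl) fun _ _ => pow_nonneg hq _
  intro P hP
  obtain ⟨G, hG, rfl⟩ := Finset.mem_image.1 hP
  exact (mem_tilings.1 hG).2.footprint_layer (mem_tilings.1 hG).1

theorem tilingWeight_dyadicTiles3_le_one (hq0 : 0 ≤ q) (hq : q ≤ 1 / 8) (hU : U ⊆ cubeCells n) :
    tilingWeight (dyadicTiles3 n) q U ≤ 1 := by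
  induction hm : #U using Nat.strong_induction_on generalizing U with
  | _ m ih =>
  obtain rfl | ⟨c₀, hc₀⟩ := U.eq_empty_or_nonempty
  · exact (tilingWeight_empty empty_notMem_dyadicTiles3).le
  set s := c₀.2.2
  have hrest : ∀ P ∈ (tilings (dyadicTiles3 n) U).image (filter (MeetsLevel s)),
      tilingWeight (dyadicTiles3 n) q (U \ P.biUnion id) ≤ 1 := by
    intro P hP
    obtain ⟨G, hG, rfl⟩ := Finset.mem_image.1 hP
    obtain ⟨t, htG, hct⟩ := (mem_tilings.1 hG).2.exists_mem hc₀
    refine ih _ ?_ (sdiff_subset.trans hU) rfl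
    exact hm ▸ card_lt_card ⟨sdiff_subset, fun h => (mem_sdiff.1 (h hc₀)).2
      (Finset.mem_biUnion.2 ⟨t, mem_filter.2 ⟨htG, c₀, hct, rfl⟩, hct⟩)⟩
  have hslice : tilingWeight (dyadicRects n) q (levelSlice U s) ≤ 1 / 4 := by
    refine tilingWeight_dyadicRects_le (a := 0) (b := 0) hq0 (by linarith) (Nat.zero_le n)
      (Nat.zero_le n) ⟨(c₀.1, c₀.2.1), mem_levelSlice.2 hc₀⟩ fun ⟨u, v⟩ huv => ?_
    have := hU (mem_levelSlice.1 huv)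
    simp only [cubeCells, mem_product] at this ⊢
    exact ⟨this.1, this.2.1⟩
  calc tilingWeight (dyadicTiles3 n) q U
      ≤ ∑ P ∈ (tilings (dyadicTiles3 n) U).image (filter (MeetsLevel s)),
          q ^ #P * tilingWeight (dyadicTiles3 n) q (U \ P.biUnion id) :=
        tilingWeight_le_sum_layers _ hq0
    _ ≤ ∑ P ∈ (tilings (dyadicTiles3 n) U).image (filter (MeetsLevel s)), q ^ #P :=
        sum_le_sum fun P hP => mul_le_of_le_one_right (pow_nonneg hq0 _) (hrest P hP)
    _ ≤ tilingWeight (dyadicRects n) q (levelSlice U s) :=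
        sum_layers_le_tilingWeight_levelSlice s hq0
    _ ≤ 1 := by linarith

end Tiles3

def cellCenter (n u : ℕ) : ℝ := ((2 * u + 1 : ℕ) : ℝ) / 2 ^ (n + 1)

def cellCenter3 (n : ℕ) (c : ℕ × ℕ × ℕ) : ℝ × ℝ × ℝ :=
  (cellCenter n c.1, cellCenter n c.2.1, cellCenter n c.2.2)

section CellCenter

variable {n i a u : ℕ}

lemma cast_div_two_pow_eq (hi : i ≤ n) (a : ℕ) :
    (a : ℝ) / 2 ^ i = ((2 * (a * 2 ^ (n - i)) : ℕ) : ℝ) / 2 ^ (n + 1) := by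
  rw [show n + 1 = 1 + (n - i) + i by omega, pow_add, pow_add]
  push_cast
  field_simp

/-- By parity a centre `(2u+1)/2^(n+1)` is never an endpoint `a/2^i` with `i ≤ n`, so the
closed and the open dyadic interval contain the same centres. -/
lemma cellCenter_mem_Icc_iff (hi : i ≤ n) :
    cellCenter n u ∈ Icc ((a : ℝ) / 2 ^ i) (((a : ℝ) + 1) / 2 ^ i) ↔ u ∈ dyadicCells n i a := by
  rw [show (a : ℝ) + 1 = ((a + 1 : ℕ) : ℝ) by push_cast; rfl, cast_div_two_pow_eq hi,
    cast_div_two_pow_eq hi, cellCenter, Set.mem_Icc, div_le_div_iff_of_pos_right (by positivity),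
    div_le_div_iff_of_pos_right (by positivity), Nat.cast_le, Nat.cast_le, mem_dyadicCells]
  omega

lemma cellCenter_mem_Ioo_iff (hi : i ≤ n) :
    cellCenter n u ∈ Ioo ((a : ℝ) / 2 ^ i) (((a : ℝ) + 1) / 2 ^ i) ↔ u ∈ dyadicCells n i a := by
  rw [show (a : ℝ) + 1 = ((a + 1 : ℕ) : ℝ) by push_cast; rfl, cast_div_two_pow_eq hi,
    cast_div_two_pow_eq hi, cellCenter, Set.mem_Ioo, div_lt_div_iff_of_pos_right (by positivity),
    div_lt_div_iff_of_pos_right (by positivity), Nat.cast_lt, Nat.cast_lt, mem_dyadicCells]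
  omega

variable {x : TileIndex3 n} {c : ℕ × ℕ × ℕ}

lemma cellCenter3_mem_tileOf3_iff : cellCenter3 n c ∈ tileOf3 n x ↔ c ∈ tileCells x := by
  simp only [tileOf3, dyadicTile3, cellCenter3, Set.mem_prod, tileCells, mem_product,
    cellCenter_mem_Icc_iff x.1.1.1.is_le, cellCenter_mem_Icc_iff x.1.1.2.is_le,
    cellCenter_mem_Icc_iff (Nat.sub_le _ _ |>.trans (Nat.sub_le _ _))]

lemma cellCenter3_mem_interior_tileOf3_iff :
    cellCenter3 n c ∈ interior (tileOf3 n x) ↔ c ∈ tileCells x := by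
  simp only [tileOf3, dyadicTile3, interior_prod_eq, interior_Icc, cellCenter3, Set.mem_prod,
    tileCells, mem_product, cellCenter_mem_Ioo_iff x.1.1.1.is_le,
    cellCenter_mem_Ioo_iff x.1.1.2.is_le,
    cellCenter_mem_Ioo_iff (Nat.sub_le _ _ |>.trans (Nat.sub_le _ _))]

lemma cellCenter3_mem_unitCube_iff : cellCenter3 n c ∈ unitCube ↔ c ∈ cubeCells n := by
  have h (u : ℕ) := cellCenter_mem_Icc_iff (n := n) (a := 0) (u := u) (Nat.zero_le n)
  simp only [Nat.cast_zero, zero_add, pow_zero, div_one] at h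
  simp only [unitCube, cubeCells, cellCenter3, Set.mem_prod, mem_product, h]

end CellCenter

section Bridge

variable {n : ℕ}

lemma tileCells_injective : Function.Injective (tileCells (n := n)) := by
  intro x y h
  have hne : ∀ z : TileIndex3 n, (dyadicCells n z.1.1.2 z.1.2.2.1 ×ˢ
      dyadicCells n (n - z.1.1.1 - z.1.1.2) z.1.2.2.2).Nonempty := fun z =>
    dyadicCells_nonempty.product dyadicCells_nonempty
  have h1 := congrArg (Finset.image Prod.fst) h
  have h23 := congrArg (Finset.image Prod.snd) h
  simp only [tileCells, product_image_fst (hne x), product_image_fst (hne y),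
    product_image_snd dyadicCells_nonempty] at h1 h23
  have h2 := congrArg (Finset.image Prod.fst) h23
  have h3 := congrArg (Finset.image Prod.snd) h23
  simp only [product_image_fst dyadicCells_nonempty, product_image_snd dyadicCells_nonempty]
    at h2 h3
  obtain ⟨hi, ha⟩ := (dyadicCells_inj x.1.1.1.is_le y.1.1.1.is_le).1 h1
  obtain ⟨hj, hb⟩ := (dyadicCells_inj x.1.1.2.is_le y.1.1.2.is_le).1 h2
  obtain ⟨-, hc⟩ := (dyadicCells_inj (Nat.sub_le _ _ |>.trans (Nat.sub_le _ _))
    (Nat.sub_le _ _ |>.trans (Nat.sub_le _ _))).1 h3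
  exact Subtype.ext (Prod.ext (Prod.ext (Fin.ext hi) (Fin.ext hj))
    (Prod.ext (Fin.ext ha) (Prod.ext (Fin.ext hb) (Fin.ext hc))))

/-- A tiling of the real cube yields a tiling of its cells: a cell belongs to the tile containing
its centre. -/
lemma TileableCube.exists_isTiling {S : Finset (TileIndex3 n)} (h : TileableCube n S) :
    ∃ D ⊆ S, IsTiling (D.image tileCells) (cubeCells n) := by
  classical
  obtain ⟨F, hFS, -, hFU, hFdisj⟩ := h
  refine ⟨{x ∈ S | tileOf3 n x ∈ F}, filter_subset _ _, fun t ht t' ht' hne => ?_, ?_⟩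
  · obtain ⟨x, hx, rfl⟩ := Finset.mem_image.1 ht
    obtain ⟨y, hy, rfl⟩ := Finset.mem_image.1 ht'
    have hxy : tileOf3 n x ≠ tileOf3 n y := fun he => hne (by
      ext c
      rw [← cellCenter3_mem_tileOf3_iff, he, cellCenter3_mem_tileOf3_iff])
    refine disjoint_left.2 fun c hcx hcy => ?_
    exact (Set.eq_empty_iff_forall_notMem.1 (hFdisj (mem_filter.1 hx).2 (mem_filter.1 hy).2 hxy))
      _ ⟨cellCenter3_mem_interior_tileOf3_iff.2 hcx, cellCenter3_mem_interior_tileOf3_iff.2 hcy⟩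
  · ext c
    simp only [Finset.mem_biUnion, Finset.mem_image, mem_filter, id]
    rw [← cellCenter3_mem_unitCube_iff, ← hFU]
    constructor
    · rintro ⟨_, ⟨x, ⟨-, hxF⟩, rfl⟩, hc⟩
      exact ⟨_, hxF, cellCenter3_mem_tileOf3_iff.2 hc⟩
    · rintro ⟨t, htF, hct⟩
      obtain ⟨x, hxS, rfl⟩ := hFS t htF
      exact ⟨_, ⟨x, ⟨hxS, htF⟩, rfl⟩, cellCenter3_mem_tileOf3_iff.1 hct⟩

end Bridge

section Counting

variable {n : ℕ}

lemma card_tileCells (x : TileIndex3 n) : #(tileCells x) = 2 ^ (2 * n) := by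
  rw [tileCells, card_product, card_product, card_dyadicCells, card_dyadicCells, card_dyadicCells,
    ← pow_add, ← pow_add]
  have := x.2.1
  congr 1
  omega

lemma two_pow_le_card_of_isTiling {G : Finset (Finset (ℕ × ℕ × ℕ))} (hGT : G ⊆ dyadicTiles3 n)
    (hG : IsTiling G (cubeCells n)) : 2 ^ n ≤ #G := by
  have h := card_biUnion_le (s := G) (t := id)
  have hcard : ∀ t ∈ G, #(id t) = 2 ^ (2 * n) := fun t ht => by
    obtain ⟨x, -, rfl⟩ := Finset.mem_image.1 (hGT ht)
    exact card_tileCells x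
  rw [hG.2, sum_congr rfl hcard, sum_const, smul_eq_mul, cubeCells, card_product, card_product,
    card_dyadicCells, Nat.sub_zero, ← pow_add, ← pow_add, show n + (n + n) = n + 2 * n by ring,
    pow_add] at h
  exact Nat.le_of_mul_le_mul_right h (by positivity)

theorem T3_le_pow (p : ℝ) (hp0 : 0 ≤ p) (hp : p ≤ 1 / 8) : T3 n p ≤ (8 * p) ^ 2 ^ n := by
  classical
  calc T3 n p ≤ ∑ D with IsTiling (D.image tileCells) (cubeCells n), p ^ #D := by
        refine sum_weight_le_of_exists_subset hp0 (by linarith) _ _ fun S hS => ?_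
        obtain ⟨D, hDS, hD⟩ := hS.exists_isTiling
        exact ⟨D, mem_filter.2 ⟨mem_univ D, hD⟩, hDS⟩
    _ ≤ ∑ G ∈ tilings (dyadicTiles3 n) (cubeCells n), p ^ #G :=
        sum_le_sum_of_injOn (Finset.image tileCells)
          (Finset.image_injective tileCells_injective).injOn
          (fun D hD => mem_tilings.2 ⟨image_subset_image (subset_univ D), (mem_filter.1 hD).2⟩)
          (fun D _ => by rw [card_image_of_injective D tileCells_injective])
          fun _ _ => pow_nonneg hp0 _
    _ ≤ ∑ G ∈ tilings (dyadicTiles3 n) (cubeCells n), (8 * p) ^ 2 ^ n * (1 / 8) ^ #G := by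
        refine sum_le_sum fun G hG => ?_
        obtain ⟨hGT, hG⟩ := mem_tilings.1 hG
        calc p ^ #G = (8 * p) ^ #G * (1 / 8) ^ #G := by rw [← mul_pow]; ring_nf
          _ ≤ (8 * p) ^ 2 ^ n * (1 / 8) ^ #G := by
            refine mul_le_mul_of_nonneg_right ?_ (by positivity)
            exact pow_le_pow_of_le_one (by positivity) (by linarith)
              (two_pow_le_card_of_isTiling hGT hG)
    _ = (8 * p) ^ 2 ^ n * tilingWeight (dyadicTiles3 n) (1 / 8) (cubeCells n) := by
        rw [tilingWeight, mul_sum]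
    _ ≤ (8 * p) ^ 2 ^ n :=
        mul_le_of_le_one_right (by positivity)
          (tilingWeight_dyadicTiles3_le_one (by norm_num) le_rfl subset_rfl)

end Counting

lemma exists_mem_Icc_div_two_pow {z : ℝ} (hz : z ∈ Icc (0 : ℝ) 1) (n : ℕ) :
    ∃ c : ℕ, c < 2 ^ n ∧ z ∈ Icc ((c : ℝ) / 2 ^ n) (((c : ℝ) + 1) / 2 ^ n) := by
  have h2n : (0 : ℝ) < 2 ^ n := by positivity
  rcases hz.2.eq_or_lt with rfl | hz1
  · refine ⟨2 ^ n - 1, Nat.sub_lt (Nat.two_pow_pos n) one_pos, ?_, ?_⟩ <;>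
      rw [Nat.cast_sub Nat.one_le_two_pow] <;> push_cast
    · rw [div_le_one h2n]; linarith
    · rw [sub_add_cancel, div_self h2n.ne']
  · have hz0 : 0 ≤ z * 2 ^ n := mul_nonneg hz.1 h2n.le
    refine ⟨⌊z * 2 ^ n⌋₊, (Nat.floor_lt hz0).2 (by push_cast; nlinarith), ?_, ?_⟩
    · rw [div_le_iff₀ h2n]; exact Nat.floor_le hz0
    · rw [le_div_iff₀ h2n]; exact (Nat.lt_floor_add_one _).le

lemma Ioo_div_two_pow_disjoint {c c' : ℕ} (h : c ≠ c') (n : ℕ) :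
    Disjoint (Ioo ((c : ℝ) / 2 ^ n) (((c : ℝ) + 1) / 2 ^ n))
      (Ioo ((c' : ℝ) / 2 ^ n) (((c' : ℝ) + 1) / 2 ^ n)) := by
  have key : ∀ {c c' : ℕ}, c < c' → ((c : ℝ) + 1) / 2 ^ n ≤ (c' : ℝ) / 2 ^ n := fun hlt =>
    div_le_div_of_nonneg_right (by exact_mod_cast hlt) (by positivity)
  rw [Set.Ioo_disjoint_Ioo]
  rcases h.lt_or_gt with hlt | hlt
  · exact (min_le_left _ _).trans ((key hlt).trans (le_max_right _ _))
  · exact (min_le_right _ _).trans ((key hlt).trans (le_max_left _ _))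

/-- The slabs `[0,1] × [0,1] × [c/2^n, (c+1)/2^n]` tile the cube. -/
lemma tileableCube_univ (n : ℕ) : TileableCube n Finset.univ := by
  refine ⟨Set.range fun c : Fin (2 ^ n) => dyadicTile3 0 0 n 0 0 c, ?_, ?_, ?_, ?_⟩
  · rintro _ ⟨c, rfl⟩
    exact ⟨⟨((0, 0), ⟨0, Nat.two_pow_pos n⟩, ⟨0, Nat.two_pow_pos n⟩, c), by simp⟩, mem_univ _,
      by simp [tileOf3]⟩
  · rintro _ ⟨c, rfl⟩
    exact ⟨0, 0, n, 0, 0, c, by simp, by simp, by simp, c.2, rfl⟩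
  · have h2n : (0 : ℝ) < 2 ^ n := by positivity
    ext ⟨x, y, z⟩
    simp only [Set.sUnion_range, Set.mem_iUnion, dyadicTile3, unitCube, Set.mem_prod,
      Nat.cast_zero, zero_add, pow_zero, div_one]
    constructor
    · rintro ⟨c, hx, hy, hz⟩
      refine ⟨hx, hy, Set.Icc_subset_Icc (by positivity) ((div_le_one h2n).2 ?_) hz⟩
      exact_mod_cast Nat.succ_le_of_lt c.2
    · rintro ⟨hx, hy, hz⟩
      obtain ⟨c, hc, hcz⟩ := exists_mem_Icc_div_two_pow hz n
      exact ⟨⟨c, hc⟩, hx, hy, hcz⟩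
  · rintro _ ⟨c, rfl⟩ _ ⟨c', rfl⟩ hne
    have hcc : (c : ℕ) ≠ c' := fun h => hne (by rw [Fin.ext h])
    refine Set.eq_empty_iff_forall_notMem.2 fun ⟨x, y, z⟩ ⟨h, h'⟩ => ?_
    simp only [dyadicTile3, interior_prod_eq, interior_Icc, Set.mem_prod] at h h'
    exact Set.disjoint_left.1 (Ioo_div_two_pow_disjoint hcc n) h.2.2 h'.2.2

lemma T3_one (n : ℕ) : T3 n 1 = 1 := by
  rw [T3, sum_eq_single Finset.univ]
  · simp [tileableCube_univ]
  · intro S _ hS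
    rw [sub_self, zero_pow (Nat.sub_ne_zero_of_lt ?_), mul_zero, ite_self]
    exact card_univ (α := TileIndex3 n) ▸ card_lt_card (ssubset_univ_iff.2 hS)
  · simp

lemma T3_nonneg (n : ℕ) {p : ℝ} (hp0 : 0 ≤ p) (hp1 : p ≤ 1) : 0 ≤ T3 n p :=
  sum_nonneg fun S _ => by
    split_ifs
    · exact mul_nonneg (pow_nonneg hp0 _) (pow_nonneg (by linarith) _)
    · exact le_rfl

/-- for `0 ≤ p < 1/8`, `T³_n(p) → 0` as `n → ∞`; in particular `p_c(3) ≥ 1/8`. -/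
theorem three_dim_lower_bound :
    (∀ p : ℝ, 0 ≤ p → p < 1 / 8 → Tendsto (fun n => T3 n p) atTop (𝓝 0)) ∧
    1 / 8 ≤ pc3 := by
  have hlim : ∀ p : ℝ, 0 ≤ p → p < 1 / 8 → Tendsto (fun n => T3 n p) atTop (𝓝 0) :=
    fun p hp0 hp => squeeze_zero (fun n => T3_nonneg n hp0 (by linarith))
      (fun n => T3_le_pow p hp0 hp.le)
      ((tendsto_pow_atTop_nhds_zero_of_lt_one (by positivity) (by linarith)).comp
        (tendsto_pow_atTop_atTop_of_one_lt one_lt_two))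
  refine ⟨hlim, le_csInf ⟨1, ⟨by norm_num, by norm_num⟩, by simp [T3_one]⟩ ?_⟩
  rintro q ⟨hq, hq1⟩
  by_contra! h
  exact zero_ne_one (tendsto_nhds_unique (hlim q hq.1 h) hq1)
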